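/- Let K be a division ring finite-dimensional over its center, and L/K a division ring extension with Z(K) ⊆ Z(L) such that K is existentially closed in L (every existential sentence in the language of K-rings true in L is true in K). Then L/K is a regular extension: every element of L algebraic over K lies in K. -/

import Mathlib

/-- Terms of the language of `K`-rings in `n` variables: noncommutative polynomial
expressions built from constants from `K`, variables, addition, multiplication and
negation. -/
inductive KTerm (K : Type*) (n : ℕ) : Type _
  | const : K → KTerm K n
  | var : Fin n → KTerm K n
  | add : KTerm K n → KTerm K n → KTerm K n
  | mul : KTerm K n → KTerm K n → KTerm K n
  | neg : KTerm K n → KTerm K n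

/-- Evaluation of a term of the language of `K`-rings in a `K`-ring `R` (given by
`ι : K →+* R`) at a tuple of values for the variables. -/
def KTerm.eval {K R : Type*} [NonAssocSemiring K] [Ring R] {n : ℕ} (ι : K →+* R) :
    KTerm K n → (Fin n → R) → R
  | const a, _ => ι a
  | var i, y => y i
  | add s t, y => KTerm.eval ι s y + KTerm.eval ι t y
  | mul s t, y => KTerm.eval ι s y * KTerm.eval ι t y
  | neg t, y => -KTerm.eval ι t y

/-- `x` is algebraic over the subset `k` of the division ring `L`. -/
def IsAlgebraicOverSet {L : Type*} [DivisionRing L] (k : Set L) (x : L) : Prop :=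
  ∃ (N : ℕ) (b : Fin N → L),
    (∀ y ∈ Subfield.closure (insert x k), ∃ c : Fin N → L,
      (∀ i, c i ∈ k) ∧ y = ∑ i, c i * b i) ∧
    (∀ y ∈ Subfield.closure (insert x k), ∃ c : Fin N → L,
      (∀ i, c i ∈ k) ∧ y = ∑ i, b i * c i)

/-! Let `k = Z(K)` and let `W ⊆ L` be the division ring generated by `K` and an algebraic `x`;
it is a finite-dimensional `k`-algebra. If `t ∈ W` commutes with `K`, then its minimal
polynomial over `k` has a root commuting with a `k`-basis of `K`. This is an existential
sentence, so the polynomial also has a root in `K` commuting with `K`, i.e. a root in `k`, and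
by irreducibility `t ∈ k`. So the centralizer of `K` in `W` is `k`, and the Jacobson density
theorem for `W` as a `K ⊗ Wᵐᵒᵖ`-module gives `(dim W)² ≤ dim K · dim W`, forcing `K = W ∋ x`. -/

open Module Polynomial TensorProduct

namespace KTerm

variable {K R : Type*} {n : ℕ}

def pow [One K] (t : KTerm K n) : ℕ → KTerm K n
  | 0 => const 1
  | m + 1 => mul (t.pow m) t

def sumRange [Zero K] (f : ℕ → KTerm K n) : ℕ → KTerm K n
  | 0 => const 0
  | m + 1 => add (sumRange f m) (f m)

def commutator (s t : KTerm K n) : KTerm K n :=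
  add (mul s t) (neg (mul t s))

def ofPolynomial [Semiring K] (q : K[X]) : KTerm K 1 :=
  sumRange (fun i => mul (const (q.coeff i)) ((var 0).pow i)) (q.natDegree + 1)

section Eval

variable [NonAssocSemiring K] [Ring R] (ι : K →+* R) (y : Fin n → R)

@[simp]
theorem eval_pow (t : KTerm K n) (m : ℕ) : (t.pow m).eval ι y = t.eval ι y ^ m := by
  induction m with
  | zero => simp [pow, eval]
  | succ m ih => rw [pow, eval, ih, pow_succ]

@[simp]
theorem eval_sumRange (f : ℕ → KTerm K n) (m : ℕ) :
    (sumRange f m).eval ι y = ∑ i ∈ Finset.range m, (f i).eval ι y := by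
  induction m with
  | zero => simp [sumRange, eval]
  | succ m ih => rw [sumRange, eval, ih, Finset.sum_range_succ]

@[simp]
theorem eval_commutator (s t : KTerm K n) :
    (commutator s t).eval ι y = s.eval ι y * t.eval ι y - t.eval ι y * s.eval ι y := by
  simp [commutator, eval, sub_eq_add_neg]

end Eval

@[simp]
theorem eval_ofPolynomial [Semiring K] [Ring R] (ι : K →+* R) (q : K[X]) (y : Fin 1 → R) :
    (ofPolynomial q).eval ι y = q.eval₂ ι (y 0) := by
  simp [ofPolynomial, eval, eval₂_eq_sum_range]

end KTerm

section Density

variable {k D : Type*} [Field k]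

def Subalgebra.mulLeftRight [Semiring D] [Algebra k D] (B : Subalgebra k D) :
    B ⊗[k] Dᵐᵒᵖ →ₐ[k] Module.End k D :=
  Algebra.TensorProduct.lift ((Algebra.lmul k D).comp B.val) (Algebra.lsmul k k D)
    fun _ _ => show Commute _ _ from LinearMap.ext fun _ => (mul_assoc _ _ _).symm

@[simp]
theorem Subalgebra.mulLeftRight_tmul [Semiring D] [Algebra k D] (B : Subalgebra k D) (b : B)
    (d : Dᵐᵒᵖ) (v : D) : B.mulLeftRight (b ⊗ₜ d) v = b * v * d.unop := by
  rw [mulLeftRight, Algebra.TensorProduct.lift_tmul, Module.End.mul_apply]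
  exact (mul_assoc _ _ _).symm

variable [Ring D] [IsDomain D] [Algebra k D] [FiniteDimensional k D]

/-- Jacobson density: `D` is a simple `B ⊗ Dᵐᵒᵖ`-module whose endomorphisms are left
multiplications by elements of the centralizer of `B`, i.e. scalars. -/
theorem Subalgebra.mulLeftRight_surjective (B : Subalgebra k D)
    (hB : Subalgebra.centralizer k (B : Set D) = ⊥) : Function.Surjective B.mulLeftRight := by
  let _ : Module (B ⊗[k] Dᵐᵒᵖ) D := Module.compHom D B.mulLeftRight.toRingHom
  have smul_def (r : B ⊗[k] Dᵐᵒᵖ) (v : D) : r • v = B.mulLeftRight r v := rfl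
  have : IsSimpleModule (B ⊗[k] Dᵐᵒᵖ) D := by
    refine isSimpleModule_iff_toSpanSingleton_surjective.2 ⟨inferInstance, fun u hu w => ?_⟩
    obtain ⟨u, rfl⟩ := FiniteDimensional.isUnit k hu
    exact ⟨1 ⊗ₜ .op (↑u⁻¹ * w), by simp [smul_def, ← mul_assoc]⟩
  have scalar (g : Module.End (B ⊗[k] Dᵐᵒᵖ) D) : ∃ c : k, ∀ v, g v = c • v := by
    have right (v : D) : g v = g 1 * v := by
      simpa [smul_def] using g.map_smul (1 ⊗ₜ .op v) 1
    have left (b : B) : g b = b * g 1 := by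
      simpa [smul_def] using g.map_smul (b ⊗ₜ 1) 1
    have hcent : g 1 ∈ Subalgebra.centralizer k (B : Set D) :=
      (Subalgebra.mem_centralizer_iff k).2 fun b hb => by rw [← left ⟨b, hb⟩, right]
    obtain ⟨c, hc⟩ := Algebra.mem_bot.1 (hB ▸ hcent)
    exact ⟨c, fun v => by rw [right, ← hc, Algebra.smul_def]⟩
  intro f
  let f' : Module.End (Module.End (B ⊗[k] Dᵐᵒᵖ) D) D :=
    { toFun := f
      map_add' := f.map_add
      map_smul' := fun g v => by
        obtain ⟨c, hc⟩ := scalar g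
        simp [Module.End.smul_def, hc] }
  classical
  let basis := Module.finBasis k D
  obtain ⟨r, hr⟩ := jacobson_density f' (Finset.univ.image basis)
  exact ⟨r, basis.ext fun i => (hr _ (Finset.mem_image_of_mem _ (Finset.mem_univ i))).symm⟩

theorem Subalgebra.eq_top_of_centralizer_eq_bot (B : Subalgebra k D)
    (hB : Subalgebra.centralizer k (B : Set D) = ⊥) : B = ⊤ := by
  have hdim : finrank k D * finrank k D ≤ finrank k B * finrank k D :=
    calc finrank k D * finrank k D = finrank k (Module.End k D) :=
          (finrank_linearMap k k D D).symm
      _ ≤ finrank k (B ⊗[k] Dᵐᵒᵖ) :=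
          LinearMap.finrank_le_finrank_of_surjective (f := B.mulLeftRight.toLinearMap)
            (B.mulLeftRight_surjective hB)
      _ = finrank k B * finrank k D := by
          rw [finrank_tensorProduct, ← (MulOpposite.opLinearEquiv k (M := D)).finrank_eq]
  refine Algebra.toSubmodule_eq_top.1 (Submodule.eq_top_of_finrank_eq ?_)
  exact (Submodule.finrank_le _).antisymm (le_of_mul_le_mul_right hdim finrank_pos)

theorem Subalgebra.eq_of_le_of_centralizer_inf_eq_bot {L : Type*} [Ring L] [IsDomain L]
    [Algebra k L] {B W : Subalgebra k L} [FiniteDimensional k W] (hBW : B ≤ W)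
    (hB : Subalgebra.centralizer k (B : Set L) ⊓ W = ⊥) : B = W := by
  let B' := B.comap W.val
  have hB' : Subalgebra.centralizer k (B' : Set W) = ⊥ := by
    refine le_bot_iff.1 fun t ht => ?_
    have htB : (t : L) ∈ Subalgebra.centralizer k (B : Set L) ⊓ W :=
      ⟨(Subalgebra.mem_centralizer_iff k).2 fun b hb =>
        congrArg Subtype.val ((Subalgebra.mem_centralizer_iff k).1 ht ⟨b, hBW hb⟩ hb), t.2⟩
    obtain ⟨c, hc⟩ := Algebra.mem_bot.1 (hB ▸ htB)
    exact Algebra.mem_bot.2 ⟨c, Subtype.ext hc⟩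
  refine hBW.antisymm fun x hx => ?_
  have hxB' : (⟨x, hx⟩ : W) ∈ B' := by
    rw [B'.eq_top_of_centralizer_eq_bot hB']
    trivial
  exact hxB'

end Density

section CenterSpan

variable {K : Type*} [DivisionRing K] {n : ℕ} {e : Fin n → K}

theorem span_center_eq_top_of_forall_eq_sum
    (he : ∀ y : K, ∃ c : Fin n → K, (∀ i, c i ∈ Subring.center K) ∧ y = ∑ i, c i * e i) :
    Submodule.span (Subring.center K) (Set.range e) = ⊤ := by
  refine eq_top_iff.2 fun y _ => ?_
  obtain ⟨c, hc, rfl⟩ := he y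
  exact (Submodule.mem_span_range_iff_exists_fun _).2 ⟨fun i => ⟨c i, hc i⟩, rfl⟩

theorem mem_center_of_forall_commute (hspan : Submodule.span (Subring.center K) (Set.range e) = ⊤)
    {a : K} (ha : ∀ i, Commute a (e i)) : a ∈ Subring.center K := by
  refine Subring.mem_center_iff.2 fun y => (Algebra.commute_of_mem_adjoin_of_forall_mem_commute
    (Algebra.span_le_adjoin _ _ (hspan ▸ Submodule.mem_top)) ?_).symm
  rintro _ ⟨i, rfl⟩
  exact ha i

end CenterSpan

theorem mem_range_algebraMap_of_isRoot_minpoly {k A : Type*} [Field k] [Ring A] [IsDomain A]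
    [Algebra k A] {t : A} (ht : IsIntegral k t) {a : k} (ha : (minpoly k t).IsRoot a) :
    t ∈ (algebraMap k A).range :=
  minpoly.mem_range_of_degree_eq_one k t
    (degree_eq_one_of_irreducible_of_root (minpoly.irreducible ht) ha)

theorem Subalgebra.finiteDimensional_of_forall_eq_sum_mul {k K L : Type*} [Field k] [Ring K]
    [Ring L] [Algebra k K] [Algebra k L] [FiniteDimensional k K] (ι : K →ₐ[k] L)
    (W : Subalgebra k L) {N : ℕ} (b : Fin N → L)
    (hW : ∀ y ∈ W, ∃ c : Fin N → L, (∀ i, c i ∈ Set.range ι) ∧ y = ∑ i, c i * b i) :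
    FiniteDimensional k W := by
  let M := LinearMap.range ι.toLinearMap * Submodule.span k (Set.range b)
  have hM : M.FG :=
    (Submodule.fg_range ι.toLinearMap).mul (Submodule.fg_span (Set.finite_range b))
  have hWM : Subalgebra.toSubmodule W ≤ M := by
    intro y hy
    obtain ⟨c, hc, rfl⟩ := hW y hy
    exact Submodule.sum_mem _ fun i _ =>
      Submodule.mul_mem_mul (hc i) (Submodule.subset_span ⟨i, rfl⟩)
  have : FiniteDimensional k M := Module.Finite.iff_fg.2 hM
  exact Subalgebra.finiteDimensional_toSubmodule.1 (Submodule.finiteDimensional_of_le hWM)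

def RingHom.IsExistentiallyClosed {K L : Type*} [Ring K] [Ring L] (ι : K →+* L) : Prop :=
  ∀ (nv : ℕ) (E Ne : List (KTerm K nv)),
    (∃ y : Fin nv → L, (∀ t ∈ E, KTerm.eval ι t y = 0) ∧ (∀ t ∈ Ne, KTerm.eval ι t y ≠ 0)) →
    (∃ y : Fin nv → K, (∀ t ∈ E, KTerm.eval (RingHom.id K) t y = 0) ∧
      (∀ t ∈ Ne, KTerm.eval (RingHom.id K) t y ≠ 0))

theorem RingHom.IsExistentiallyClosed.exists_root_commute {K L : Type*} [Ring K] [Ring L]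
    {ι : K →+* L} (hec : ι.IsExistentiallyClosed) (q : K[X]) {n : ℕ} (e : Fin n → K) {t : L}
    (hq : q.eval₂ ι t = 0) (ht : ∀ i, Commute t (ι (e i))) :
    ∃ a : K, q.eval a = 0 ∧ ∀ i, Commute a (e i) := by
  let E : List (KTerm K 1) :=
    KTerm.ofPolynomial q :: List.ofFn fun i => (KTerm.var 0).commutator (.const (e i))
  obtain ⟨y, hy, -⟩ := hec 1 E []
    ⟨fun _ => t, by simpa [E, KTerm.eval, sub_eq_zero, commute_iff_eq] using ⟨hq, ht⟩, by simp⟩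
  exact ⟨y 0, by simpa [E, KTerm.eval, sub_eq_zero, commute_iff_eq] using hy⟩

theorem mem_bot_of_forall_commute {K L : Type*} [DivisionRing K] [Ring L]
    [IsDomain L] [Algebra (Subring.center K) L] (ι : K →ₐ[Subring.center K] L)
    (hec : (ι : K →+* L).IsExistentiallyClosed) {n : ℕ} {e : Fin n → K}
    (hspan : Submodule.span (Subring.center K) (Set.range e) = ⊤) {t : L}
    (ht : IsIntegral (Subring.center K) t) (hcomm : ∀ i, Commute t (ι (e i))) :
    t ∈ (⊥ : Subalgebra (Subring.center K) L) := by
  set k := Subring.center K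
  have hq : ((minpoly k t).map k.subtype).eval₂ (ι : K →+* L) t = 0 := by
    rw [eval₂_map, ← minpoly.aeval k t, aeval_def, ← ι.comp_algebraMap]
    rfl
  obtain ⟨a, ha, hae⟩ := hec.exists_root_commute _ e hq hcomm
  have ha_center := mem_center_of_forall_commute hspan hae
  refine Algebra.mem_bot.2 <| mem_range_algebraMap_of_isRoot_minpoly ht (a := ⟨a, ha_center⟩) ?_
  rw [IsRoot, ← ZeroMemClass.coe_eq_zero, ← k.coe_subtype, ← eval₂_at_apply, ← eval_map]
  exact ha

/-- Theorem 2 of the paper.  Let `K` be a division ring finite-dimensional over its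
center, and `L/K` (via `ι`) a division ring extension with `Z(K) ⊆ Z(L)` such that `K` is
existentially closed in `L`: every existential sentence of the language of `K`-rings
(solvability of a finite system of equations and inequations between terms) true in `L`
is true in `K`.  Then `L/K` is regular: every element of `L` algebraic over `K` lies in
`K`. -/
theorem regular_of_existentially_closed
    {K L : Type*} [DivisionRing K] [DivisionRing L] (ι : K →+* L)
    (hfin : ∃ (n : ℕ) (e : Fin n → K), ∀ y : K,
      ∃ c : Fin n → K, (∀ i, c i ∈ Subring.center K) ∧ y = ∑ i, c i * e i)
    (hZ : ∀ a ∈ Subring.center K, ι a ∈ Subring.center L)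
    (hec : ∀ (nv : ℕ) (E Ne : List (KTerm K nv)),
      (∃ y : Fin nv → L, (∀ t ∈ E, KTerm.eval ι t y = 0) ∧
        (∀ t ∈ Ne, KTerm.eval ι t y ≠ 0)) →
      (∃ y : Fin nv → K, (∀ t ∈ E, KTerm.eval (RingHom.id K) t y = 0) ∧
        (∀ t ∈ Ne, KTerm.eval (RingHom.id K) t y ≠ 0))) :
    ∀ x : L, IsAlgebraicOverSet (Set.range ι) x → x ∈ Set.range ι := by
  intro x hx
  obtain ⟨n, e, he⟩ := hfin
  obtain ⟨N, b, hleft, -⟩ := hx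
  set k := Subring.center K
  let _ : Algebra k L := (ι.comp k.subtype).toAlgebra' fun c v =>
    (Subring.mem_center_iff.1 (hZ c c.2) v).symm
  let ιₐ : K →ₐ[k] L := { ι with commutes' := fun _ => rfl }
  have hspan := span_center_eq_top_of_forall_eq_sum he
  have : FiniteDimensional k K := ⟨hspan ▸ Submodule.fg_span (Set.finite_range e)⟩
  let W : Subalgebra k L :=
    { (Subfield.closure (insert x (Set.range ι))).toSubsemiring with
      algebraMap_mem' := fun c => Subfield.subset_closure (.inr ⟨c, rfl⟩) }
  have : FiniteDimensional k W := W.finiteDimensional_of_forall_eq_sum_mul ιₐ b hleft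
  have hKW : ιₐ.range ≤ W := by
    rintro _ ⟨a, rfl⟩
    exact Subfield.subset_closure (.inr ⟨a, rfl⟩)
  have hcent : Subalgebra.centralizer k (ιₐ.range : Set L) ⊓ W = ⊥ := by
    refine le_bot_iff.1 fun t ⟨ht, htW⟩ => ?_
    refine mem_bot_of_forall_commute ιₐ hec hspan
      ((IsIntegral.of_finite k (⟨t, htW⟩ : W)).map W.val) fun i => ?_
    exact ((Subalgebra.mem_centralizer_iff k).1 ht _ ⟨e i, rfl⟩).symm
  have hxW : x ∈ W := Subfield.subset_closure (.inl rfl)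
  rw [← Subalgebra.eq_of_le_of_centralizer_inf_eq_bot hKW hcent] at hxW
  exact hxW
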